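/- arXiv:2312.03714 — 2 statements merged into one kernel-verified Lean document; each statement's English description precedes it below -/
import Mathlib

section
/- Let (X, D, K) be a b-metric-like space and let {yₙ} be a sequence in X such that D(yₙ, y_{n+1}) ≤ λ·D(y_{n-1}, yₙ) for some λ with 0 < λ < 1/K and every n ∈ ℕ. Then lim_{n,m→∞} D(yₘ, yₙ) = 0 (i.e., for every ε > 0 there exists N such that D(yₘ,yₙ) < ε for all m,n ≥ N). -/
/-!
The consecutive distances decay geometrically, `D(yₙ, yₙ₊₁) ≤ λⁿ d` with `d = D(y₀, y₁)`.
Going from `yₘ` to `yₘ₊ₖ` through `yₘ₊₁` costs a factor `K` on the remaining distance but gains a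
factor `λ`, so since `Kλ < 1` the bound `D(yₘ, yₘ₊ₖ) ≤ λᵐ C` with `C = 2Kd / (1 - Kλ)` is preserved
by induction on `k`. The case `k = 0` is where the self-distance of a b-metric-like appears:
`D(x, x) ≤ 2K D(x, y)`.
-/

open Filter Topology

section BMetricLike

variable {X : Type*} (D : X → X → ℝ) (K : ℝ)

lemma self_le_two_mul_of_triangle (hD2 : ∀ x y, D x y = D y x)
    (hD3 : ∀ x y z, D x z ≤ K * (D x y + D y z)) (x y : X) :
    D x x ≤ 2 * K * D x y := by
  have := hD3 x y x
  rw [hD2 y x] at this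
  linarith

lemma le_pow_mul_of_forall_le_pow_mul (hK : 0 ≤ K) (hD2 : ∀ x y, D x y = D y x)
    (hD3 : ∀ x y z, D x z ≤ K * (D x y + D y z)) {y : ℕ → X} {lam d : ℝ} (hlam : 0 ≤ lam)
    (hKlam : K * lam < 1) (hd : 0 ≤ d) (hstep : ∀ n, D (y n) (y (n + 1)) ≤ lam ^ n * d) :
    ∀ k m, D (y m) (y (m + k)) ≤ lam ^ m * (2 * K * d / (1 - K * lam)) := by
  set C := 2 * K * d / (1 - K * lam)
  have hC : C * (1 - K * lam) = 2 * K * d := div_mul_cancel₀ _ (by linarith)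
  have hKd : 0 ≤ K * d := mul_nonneg hK hd
  have hKlam0 : 0 ≤ K * lam := mul_nonneg hK hlam
  intro k
  induction k with
  | zero =>
    intro m
    have hpow : 0 ≤ lam ^ m := pow_nonneg hlam m
    calc D (y m) (y (m + 0)) ≤ 2 * K * D (y m) (y (m + 1)) :=
          self_le_two_mul_of_triangle D K hD2 hD3 _ _
      _ ≤ 2 * K * (lam ^ m * d) := by gcongr; exact hstep m
      _ ≤ lam ^ m * C := by nlinarith [mul_nonneg hpow (mul_nonneg hKd hKlam0)]
  | succ k ih =>
    intro m
    have hpow : 0 ≤ lam ^ m := pow_nonneg hlam m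
    calc D (y m) (y (m + (k + 1)))
        ≤ K * (D (y m) (y (m + 1)) + D (y (m + 1)) (y (m + 1 + k))) := by
          rw [show m + (k + 1) = m + 1 + k by omega]; exact hD3 _ _ _
      _ ≤ K * (lam ^ m * d + lam ^ (m + 1) * C) := by gcongr; exacts [hstep m, ih (m + 1)]
      _ = lam ^ m * (K * d + K * lam * C) := by ring
      _ ≤ lam ^ m * C := by gcongr; nlinarith

lemma exists_forall_ge_lt_of_le_of_tendsto (hD2 : ∀ x y, D x y = D y x) {y : ℕ → X}
    {b : ℕ → ℝ} (hb : Tendsto b atTop (𝓝 0)) (hle : ∀ k m, D (y m) (y (m + k)) ≤ b m) :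
    ∀ ε > (0 : ℝ), ∃ N : ℕ, ∀ m ≥ N, ∀ n ≥ N, D (y m) (y n) < ε := by
  intro ε hε
  obtain ⟨N, hN⟩ := (hb.eventually (gt_mem_nhds hε)).exists_forall_of_atTop
  have hmono : ∀ m n, N ≤ m → m ≤ n → D (y m) (y n) < ε := by
    intro m n hm hmn
    obtain ⟨k, rfl⟩ := Nat.exists_eq_add_of_le hmn
    exact (hle k m).trans_lt (hN m hm)
  refine ⟨N, fun m hm n hn => ?_⟩
  rcases le_total m n with h | h
  · exact hmono m n hm h
  · rw [hD2]; exact hmono n m hn h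

end BMetricLike

theorem stmt_2_general {X : Type*} (D : X → X → ℝ) (K : ℝ) (hK : 1 ≤ K)
    (hnonneg : ∀ x y, 0 ≤ D x y)
    (hD2 : ∀ x y, D x y = D y x)
    (hD3 : ∀ x y z, D x z ≤ K * (D x y + D y z))
    (y : ℕ → X) (lam : ℝ) (hlam0 : 0 < lam) (hlamK : lam < 1 / K)
    (hcontr : ∀ n : ℕ, D (y (n + 1)) (y (n + 2)) ≤ lam * D (y n) (y (n + 1))) :
    ∀ ε > (0 : ℝ), ∃ N : ℕ, ∀ m ≥ N, ∀ n ≥ N, D (y m) (y n) < ε := by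
  have hKpos : 0 < K := one_pos.trans_le hK
  have hKlam : K * lam < 1 := by rwa [lt_div_iff₀ hKpos, mul_comm] at hlamK
  have hlam1 : lam < 1 := hlamK.trans_le ((div_le_one hKpos).mpr hK)
  have hstep : ∀ n, D (y n) (y (n + 1)) ≤ lam ^ n * D (y 0) (y 1) := fun n =>
    le_geom (u := fun n => D (y n) (y (n + 1))) hlam0.le n fun k _ => hcontr k
  have hb : Tendsto (fun m => lam ^ m * (2 * K * D (y 0) (y 1) / (1 - K * lam))) atTop (𝓝 0) := by
    simpa using (tendsto_pow_atTop_nhds_zero_of_lt_one hlam0.le hlam1).mul_const _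
  exact exists_forall_ge_lt_of_le_of_tendsto D hD2 hb
    (le_pow_mul_of_forall_le_pow_mul D K hKpos.le hD2 hD3 hlam0.le hKlam (hnonneg _ _) hstep)

theorem stmt_2 {X : Type*} (D : X → X → ℝ) (K : ℝ) (hK : 1 ≤ K)
    (hnonneg : ∀ x y, 0 ≤ D x y)
    (hD1 : ∀ x y, D x y = 0 → x = y)
    (hD2 : ∀ x y, D x y = D y x)
    (hD3 : ∀ x y z, D x z ≤ K * (D x y + D y z))
    (y : ℕ → X) (lam : ℝ) (hlam0 : 0 < lam) (hlamK : lam < 1 / K)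
    (hcontr : ∀ n : ℕ, D (y (n + 1)) (y (n + 2)) ≤ lam * D (y n) (y (n + 1))) :
    ∀ ε > (0 : ℝ), ∃ N : ℕ, ∀ m ≥ N, ∀ n ≥ N, D (y m) (y n) < ε :=
  stmt_2_general D K hK hnonneg hD2 hD3 y lam hlam0 hlamK hcontr
end

section
/- Let (X, D, K) be a b-metric-like space and let {xₙ} be a sequence in X with lim_{n→∞} D(xₙ, x) = 0. Then for every y ∈ X, (1/K)·D(x,y) ≤ liminf_{n→∞} D(xₙ, y) ≤ limsup_{n→∞} D(xₙ, y) ≤ K·D(x,y). -/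
open Filter

theorem stmt_3 {X : Type*} (D : X → X → ℝ) (K : ℝ) (hK : 1 ≤ K)
    (hnonneg : ∀ x y, 0 ≤ D x y)
    (hD1 : ∀ x y, D x y = 0 → x = y)
    (hD2 : ∀ x y, D x y = D y x)
    (hD3 : ∀ x y z, D x z ≤ K * (D x y + D y z))
    (x : X) (xs : ℕ → X)
    (hconv : Tendsto (fun n => D (xs n) x) atTop (nhds 0)) :
    ∀ y : X,
      (1 / K) * D x y ≤ liminf (fun n => D (xs n) y) atTop ∧
      liminf (fun n => D (xs n) y) atTop ≤ limsup (fun n => D (xs n) y) atTop ∧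
      limsup (fun n => D (xs n) y) atTop ≤ K * D x y := by
  intro y
  have hKpos : (0:ℝ) < K := lt_of_lt_of_le one_pos hK
  set f : ℕ → ℝ := fun n => D (xs n) y with hf
  set g : ℕ → ℝ := fun n => K * D (xs n) x + K * D x y with hg
  set h : ℕ → ℝ := fun n => (1 / K) * D x y - D (xs n) x with hh
  have hub : ∀ n, f n ≤ g n := by
    intro n
    have := hD3 (xs n) x y
    simp only [hf, hg]
    linarith [this]
  have hlb : ∀ n, h n ≤ f n := by
    intro n
    have h1 := hD3 x (xs n) y
    have h2 : D x (xs n) = D (xs n) x := hD2 x (xs n)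
    simp only [hf, hh]
    rw [div_mul_eq_mul_div, one_mul, sub_le_iff_le_add, div_le_iff₀ hKpos]
    nlinarith [hnonneg (xs n) y, hnonneg (xs n) x]
  have hgt : Tendsto g atTop (nhds (K * D x y)) := by
    have : Tendsto (fun n => K * D (xs n) x) atTop (nhds (K * 0)) :=
      (tendsto_const_nhds.mul hconv)
    simpa using this.add tendsto_const_nhds
  have hht : Tendsto h atTop (nhds ((1 / K) * D x y)) := by
    have : Tendsto (fun n => (1 / K) * D x y - D (xs n) x) atTop
        (nhds ((1 / K) * D x y - 0)) := tendsto_const_nhds.sub hconv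
    simpa [hh, one_div] using this
  have hfbelow : IsBoundedUnder (· ≥ ·) atTop f :=
    isBoundedUnder_of ⟨0, fun n => hnonneg _ _⟩
  have hfabove : IsBoundedUnder (· ≤ ·) atTop f :=
    (hgt.isBoundedUnder_le).mono_le (Eventually.of_forall hub)
  have hupper : limsup f atTop ≤ K * D x y := by
    have h1 : limsup f atTop ≤ limsup g atTop :=
      limsup_le_limsup (Eventually.of_forall hub) hfbelow.isCoboundedUnder_le
        hgt.isBoundedUnder_le
    rwa [hgt.limsup_eq] at h1
  have hlower : (1 / K) * D x y ≤ liminf f atTop := by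
    have h1 : liminf h atTop ≤ liminf f atTop :=
      liminf_le_liminf (Eventually.of_forall hlb) hht.isBoundedUnder_ge
        hfabove.isCoboundedUnder_ge
    rwa [hht.liminf_eq] at h1
  exact ⟨hlower, liminf_le_limsup hfabove hfbelow, hupper⟩
end
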